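/- Let Ω ⊆ ℝⁿ be an open set and let u, w : ℝⁿ → ℝ be nonnegative locally Lipschitz functions. Then J_Ω(min(u,w)) + J_Ω(max(u,w)) = J_Ω(u) + J_Ω(w), as an identity in [0,∞] (where min and max are taken pointwise). -/

import Mathlib

open MeasureTheory Metric Set Filter ENNReal NNReal

/-!
Near a point where `u ≠ w`, the pair `(min u w, max u w)` coincides with `(u, w)` or `(w, u)`, so
the integrands of the two sides agree there. Almost every point of the closed set `{u = w}` is a
Lebesgue density point, at which the tangent cone of `{u = w}` is the whole space; as `u` and `w`
agree on that set, their derivatives coincide at such a point (if both exist, which by Rademacher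
they do almost everywhere), and `min u w`, `max u w` share this derivative. Hence the integrands
agree almost everywhere.
-/

/-- The Alt–Caffarelli energy `J_D(u) = ∫_D (‖∇u‖² + 𝟙_{u>0})`, valued in `[0,∞]`. -/
noncomputable def JE {n : ℕ} (D : Set (EuclideanSpace ℝ (Fin n)))
    (u : EuclideanSpace ℝ (Fin n) → ℝ) : ℝ≥0∞ :=
  ∫⁻ x in D, ((‖gradient u x‖₊ : ℝ≥0∞) ^ 2 + if 0 < u x then 1 else 0)

/-- `u` is a (nonnegative, locally Lipschitz) minimizer of `J` in the open set `Ω`: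
for every nonnegative locally Lipschitz competitor `v` with `{v ≠ u}` a bounded subset
of `Ω`, one has `J_{Ω ∩ B}(u) ≤ J_{Ω ∩ B}(v)` for every open ball `B ⊇ {v ≠ u}`. -/
def IsMinimizer {n : ℕ} (Ω : Set (EuclideanSpace ℝ (Fin n)))
    (u : EuclideanSpace ℝ (Fin n) → ℝ) : Prop :=
  (∀ x, 0 ≤ u x) ∧ LocallyLipschitz u ∧
  ∀ v : EuclideanSpace ℝ (Fin n) → ℝ, (∀ x, 0 ≤ v x) → LocallyLipschitz v →
    Bornology.IsBounded {x | v x ≠ u x} → {x | v x ≠ u x} ⊆ Ω →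
    ∀ (c : EuclideanSpace ℝ (Fin n)) (r : ℝ), {x | v x ≠ u x} ⊆ Metric.ball c r →
      JE (Ω ∩ Metric.ball c r) u ≤ JE (Ω ∩ Metric.ball c r) v

open Topology Pointwise

section FiniteDimensional

variable {E : Type*} [NormedAddCommGroup E] [NormedSpace ℝ E] [FiniteDimensional ℝ E]
  [MeasurableSpace E] [BorelSpace E] {μ : Measure E} [μ.IsAddHaarMeasure]

theorem LocallyLipschitz.ae_differentiableAt {F : Type*} [NormedAddCommGroup F]
    [NormedSpace ℝ F] [FiniteDimensional ℝ F] {f : E → F} (hf : LocallyLipschitz f) :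
    ∀ᵐ x ∂μ, DifferentiableAt ℝ f x := by
  rw [ae_iff]
  refine measure_null_of_locally_null _ fun x _ => ?_
  obtain ⟨K, t, ht, hlip⟩ := hf x
  refine ⟨{y | ¬DifferentiableAt ℝ f y} ∩ interior t,
    inter_mem_nhdsWithin _ (interior_mem_nhds.2 ht), ?_⟩
  have hdiff := (hlip.mono interior_subset).ae_differentiableWithinAt_of_mem (μ := μ)
  rw [ae_iff] at hdiff
  refine measure_mono_null ?_ hdiff
  rintro y ⟨hy, hyt⟩ hdy
  exact hy ((hdy hyt).differentiableAt (isOpen_interior.mem_nhds hyt))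

/-- At a Lebesgue density point `x` of `s`, every small ball `x + r • ball y ε` meets `s`, so
`y` is a limit of directions pointing into `s`. -/
theorem tangentConeAt_eq_univ_of_tendsto_density {s : Set E} {x : E}
    (h : Tendsto (fun r => μ (s ∩ closedBall x r) / μ (closedBall x r)) (𝓝[>] 0) (𝓝 1)) :
    tangentConeAt ℝ s x = univ := by
  refine eq_univ_of_forall fun y => ?_
  rw [tangentConeAt_eq_biInter_closure, mem_iInter₂]
  refine fun U hU => Metric.mem_closure_iff.2 fun ε hε => ?_
  have hmeet : ∀ᶠ r in 𝓝[>] (0 : ℝ), (s ∩ ({x} + r • ball y ε)).Nonempty :=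
    Measure.eventually_nonempty_inter_smul_of_density_one μ s x h _ measurableSet_ball
      (measure_ball_pos μ y hε).ne'
  have hsmall : ∀ᶠ r in 𝓝[>] (0 : ℝ), {0} + r • ball y ε ⊆ U :=
    nhdsWithin_le_nhds (eventually_singleton_add_smul_subset isBounded_ball hU)
  obtain ⟨r, ⟨z, hzs, hz⟩, hrU, hr⟩ := (hmeet.and (hsmall.and self_mem_nhdsWithin)).exists
  obtain ⟨a, ha, rfl⟩ : ∃ a ∈ ball y ε, z = x + r • a := by
    simp only [singleton_add, image_add_left, mem_preimage, mem_smul_set] at hz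
    obtain ⟨a, ha, hax⟩ := hz
    exact ⟨a, ha, by rw [hax, add_neg_cancel_left]⟩
  refine ⟨r⁻¹ • r • a, smul_mem_smul (mem_univ _) ⟨hrU ?_, hzs⟩, ?_⟩
  · simpa using smul_mem_smul_set (a := r) ha
  · rw [inv_smul_smul₀ (ne_of_gt hr), dist_comm]
    exact ha

theorem ae_uniqueDiffWithinAt (s : Set E) : ∀ᵐ x ∂μ.restrict s, UniqueDiffWithinAt ℝ s x := by
  filter_upwards [Besicovitch.ae_tendsto_measure_inter_div μ s] with x hx
  have hcone := tangentConeAt_eq_univ_of_tendsto_density hx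
  exact ⟨by simp [hcone], mem_closure_of_nonempty_tangentConeAt (𝕜 := ℝ) (by simp [hcone])⟩

theorem ae_fderiv_eq_of_eq {F : Type*} [NormedAddCommGroup F] [NormedSpace ℝ F] {u w : E → F}
    (hu : Continuous u) (hw : Continuous w) :
    ∀ᵐ x ∂μ, u x = w x → DifferentiableAt ℝ u x → DifferentiableAt ℝ w x →
      fderiv ℝ u x = fderiv ℝ w x := by
  have hmeas : MeasurableSet {x | u x = w x} := (isClosed_eq hu hw).measurableSet
  filter_upwards [(ae_restrict_iff' hmeas).1 (ae_uniqueDiffWithinAt (μ := μ) {x | u x = w x})]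
    with x hx hux hdu hdw
  exact (hx hux).eq hdu.hasFDerivAt.hasFDerivWithinAt
    (hdw.hasFDerivAt.hasFDerivWithinAt.congr (fun _ hy => hy) hux)

end FiniteDimensional

theorem HasFDerivAt.of_forall_eq_or_eq {E F : Type*} [NormedAddCommGroup E] [NormedSpace ℝ E]
    [NormedAddCommGroup F] [NormedSpace ℝ F] {f u w : E → F} {L : E →L[ℝ] F} {x : E}
    (hu : HasFDerivAt u L x) (hw : HasFDerivAt w L x) (hf : ∀ y, f y = u y ∨ f y = w y)
    (hfx : f x = u x) (hx : u x = w x) : HasFDerivAt f L x := by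
  rw [hasFDerivAt_iff_isLittleO, Asymptotics.isLittleO_iff] at hu hw ⊢
  intro c hc
  filter_upwards [hu hc, hw hc] with y hyu hyw
  rcases hf y with h | h
  · rwa [h, hfx]
  · rwa [h, hfx, hx]

section EnergyDensity

variable {E : Type*} [NormedAddCommGroup E] [InnerProductSpace ℝ E] [CompleteSpace E]
  {u v w : E → ℝ} {x : E}

noncomputable def energyDensity (u : E → ℝ) (x : E) : ℝ≥0∞ :=
  (‖gradient u x‖₊ : ℝ≥0∞) ^ 2 + if 0 < u x then 1 else 0

theorem energyDensity_congr (hd : fderiv ℝ u x = fderiv ℝ v x) (h : u x = v x) :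
    energyDensity u x = energyDensity v x := by
  simp only [energyDensity, gradient, hd, h]

theorem Filter.EventuallyEq.energyDensity_eq (h : u =ᶠ[𝓝 x] v) :
    energyDensity u x = energyDensity v x :=
  energyDensity_congr h.fderiv_eq h.eq_of_nhds

theorem measurable_energyDensity [MeasurableSpace E] [BorelSpace E] (hu : Measurable u) :
    Measurable (energyDensity u) := by
  have hgrad : Measurable (gradient u) :=
    (InnerProductSpace.toDual ℝ E).symm.continuous.measurable.comp (measurable_fderiv ℝ u)
  exact (hgrad.nnnorm.coe_nnreal_ennreal.pow_const 2).add
    (Measurable.ite (measurableSet_lt measurable_const hu) measurable_const measurable_const)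

theorem ae_energyDensity_min_add_max [FiniteDimensional ℝ E] [MeasurableSpace E] [BorelSpace E]
    {μ : Measure E} [μ.IsAddHaarMeasure] (hu : LocallyLipschitz u) (hw : LocallyLipschitz w) :
    ∀ᵐ x ∂μ, energyDensity (fun y => min (u y) (w y)) x
        + energyDensity (fun y => max (u y) (w y)) x = energyDensity u x + energyDensity w x := by
  filter_upwards [hu.ae_differentiableAt, hw.ae_differentiableAt,
    ae_fderiv_eq_of_eq hu.continuous hw.continuous] with x hdu hdw hfd
  rcases lt_trichotomy (u x) (w x) with hlt | heq | hgt
  · have hev := hu.continuous.continuousAt.eventually_lt hw.continuous.continuousAt hlt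
    have hmin : (fun y => min (u y) (w y)) =ᶠ[𝓝 x] u := hev.mono fun y hy => min_eq_left hy.le
    have hmax : (fun y => max (u y) (w y)) =ᶠ[𝓝 x] w := hev.mono fun y hy => max_eq_right hy.le
    rw [hmin.energyDensity_eq, hmax.energyDensity_eq]
  · have hwL : HasFDerivAt w (fderiv ℝ u x) x := hfd heq hdu hdw ▸ hdw.hasFDerivAt
    have hmin := hdu.hasFDerivAt.of_forall_eq_or_eq hwL (fun y => min_choice (u y) (w y))
      (min_eq_left heq.le) heq
    have hmax := hdu.hasFDerivAt.of_forall_eq_or_eq hwL (fun y => max_choice (u y) (w y))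
      ((max_eq_right heq.le).trans heq.symm) heq
    rw [energyDensity_congr (hmin.fderiv.trans hdu.hasFDerivAt.fderiv.symm) (min_eq_left heq.le),
      energyDensity_congr (hmax.fderiv.trans hwL.fderiv.symm) (max_eq_right heq.le)]
  · have hev := hw.continuous.continuousAt.eventually_lt hu.continuous.continuousAt hgt
    have hmin : (fun y => min (u y) (w y)) =ᶠ[𝓝 x] w := hev.mono fun y hy => min_eq_right hy.le
    have hmax : (fun y => max (u y) (w y)) =ᶠ[𝓝 x] u := hev.mono fun y hy => max_eq_left hy.le
    rw [hmin.energyDensity_eq, hmax.energyDensity_eq, add_comm]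

end EnergyDensity

theorem JE_eq_lintegral_energyDensity {n : ℕ} (D : Set (EuclideanSpace ℝ (Fin n)))
    (u : EuclideanSpace ℝ (Fin n) → ℝ) : JE D u = ∫⁻ x in D, energyDensity u x :=
  rfl

theorem stmt0_general {n : ℕ} (Ω : Set (EuclideanSpace ℝ (Fin n)))
    (u w : EuclideanSpace ℝ (Fin n) → ℝ)
    (hu : LocallyLipschitz u) (hw : LocallyLipschitz w) :
    JE Ω (fun x => min (u x) (w x)) + JE Ω (fun x => max (u x) (w x))
      = JE Ω u + JE Ω w := by
  simp only [JE_eq_lintegral_energyDensity]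
  rw [← lintegral_add_left (measurable_energyDensity (hu.continuous.min hw.continuous).measurable),
    ← lintegral_add_left (measurable_energyDensity hu.continuous.measurable)]
  exact lintegral_congr_ae (ae_restrict_of_ae (ae_energyDensity_min_add_max hu hw))

/-- `J_Ω(min(u,w)) + J_Ω(max(u,w)) = J_Ω(u) + J_Ω(w)` as an identity in `[0,∞]`. -/
theorem stmt0 {n : ℕ} (hn : 2 ≤ n) (Ω : Set (EuclideanSpace ℝ (Fin n))) (hΩ : IsOpen Ω)
    (u w : EuclideanSpace ℝ (Fin n) → ℝ)
    (hu0 : ∀ x, 0 ≤ u x) (hw0 : ∀ x, 0 ≤ w x)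
    (hu : LocallyLipschitz u) (hw : LocallyLipschitz w) :
    JE Ω (fun x => min (u x) (w x)) + JE Ω (fun x => max (u x) (w x))
      = JE Ω u + JE Ω w :=
  stmt0_general Ω u w hu hw
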